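/- arXiv:cs/0606059 — 2 statements merged into one kernel-verified Lean document; each statement's English description precedes it below -/
import Mathlib

section
/- (Domino-Deficient Dog-Eared Rectangle Theorem) Let m, n be integers with m, n ≥ 4 and m·n ≡ 2 (mod 3), and let D ⊆ R(m,n) be a domino containing a corner cell of R(m,n) (i.e., containing one of (1,1), (1,n), (m,1), (m,n)). Then R(m,n) \ D is tileable by L-trominoes. -/
abbrev Cell : Type := ℤ × ℤ

/-- The m×n rectangle of cells (i,j), 1 ≤ i ≤ m (row), 1 ≤ j ≤ n (column). -/
def rect (m n : ℤ) : Set Cell :=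
  {c : Cell | 1 ≤ c.1 ∧ c.1 ≤ m ∧ 1 ≤ c.2 ∧ c.2 ≤ n}

/-- An L-tromino: a 2×2 block minus one of its cells. -/
def IsTromino (T : Set Cell) : Prop :=
  ∃ i j : ℤ, ∃ c : Cell,
    c ∈ ({(i, j), (i + 1, j), (i, j + 1), (i + 1, j + 1)} : Set Cell) ∧
    T = ({(i, j), (i + 1, j), (i, j + 1), (i + 1, j + 1)} : Set Cell) \ {c}

def IsHDomino (D : Set Cell) : Prop := ∃ i j : ℤ, D = {(i, j), (i, j + 1)}

def IsVDomino (D : Set Cell) : Prop := ∃ i j : ℤ, D = {(i, j), (i + 1, j)}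

def IsDomino (D : Set Cell) : Prop := IsHDomino D ∨ IsVDomino D

/-- A partition of `S` into L-trominoes, identified with its set of pieces. -/
def IsTromTiling (P : Set (Set Cell)) (S : Set Cell) : Prop :=
  (∀ p ∈ P, IsTromino p) ∧ P.PairwiseDisjoint id ∧ ⋃₀ P = S

def Tileable (S : Set Cell) : Prop := ∃ P, IsTromTiling P S

/-- A partition of `S` into dominoes, identified with its set of pieces. -/
def IsDominoTiling (P : Set (Set Cell)) (S : Set Cell) : Prop :=
  (∀ p ∈ P, IsDomino p) ∧ P.PairwiseDisjoint id ∧ ⋃₀ P = S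

/-- A partition of `S` into `k` L-trominoes and exactly one piece satisfying `dom`. -/
def IsMixedTiling (P : Set (Set Cell)) (S : Set Cell)
    (dom : Set Cell → Prop) (k : ℕ) : Prop :=
  P.PairwiseDisjoint id ∧ ⋃₀ P = S ∧
  (∀ p ∈ P, IsTromino p ∨ dom p) ∧
  {p ∈ P | dom p}.ncard = 1 ∧ {p ∈ P | IsTromino p}.ncard = k

lemma tileable_congr {S T : Set Cell} (h : Tileable S) (e : S = T) : Tileable T := e ▸ h

lemma tileable_tromino {T : Set Cell} (h : IsTromino T) : Tileable T := by
  refine ⟨{T}, ?_, ?_, by simp⟩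
  · intro p hp; simp only [Set.mem_singleton_iff] at hp; subst hp; exact h
  · exact Set.pairwiseDisjoint_singleton _ _

lemma tileable_piece (i j x y : ℤ)
    (hm : ((x, y) : Cell) ∈ ({(i, j), (i + 1, j), (i, j + 1), (i + 1, j + 1)} : Set Cell)) :
    Tileable (({(i, j), (i + 1, j), (i, j + 1), (i + 1, j + 1)} : Set Cell) \ {(x, y)}) :=
  tileable_tromino ⟨i, j, (x, y), hm, rfl⟩

lemma tileable_union {S T : Set Cell} (hS : Tileable S) (hT : Tileable T)
    (hd : Disjoint S T) : Tileable (S ∪ T) := by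
  obtain ⟨P, hP1, hP2, hP3⟩ := hS
  obtain ⟨Q, hQ1, hQ2, hQ3⟩ := hT
  refine ⟨P ∪ Q, ?_, ?_, by rw [Set.sUnion_union, hP3, hQ3]⟩
  · rintro p (hp | hp); exacts [hP1 p hp, hQ1 p hp]
  · rintro p (hp | hp) q (hq | hq) hne
    · exact hP2 hp hq hne
    · exact hd.mono (hP3 ▸ Set.subset_sUnion_of_mem hp) (hQ3 ▸ Set.subset_sUnion_of_mem hq)
    · exact hd.symm.mono (hQ3 ▸ Set.subset_sUnion_of_mem hp) (hP3 ▸ Set.subset_sUnion_of_mem hq)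
    · exact hQ2 hp hq hne

lemma tileable_image (f : Cell → Cell) (hinj : Function.Injective f)
    (htrom : ∀ T, IsTromino T → IsTromino (f '' T)) {S : Set Cell}
    (hS : Tileable S) : Tileable (f '' S) := by
  obtain ⟨P, hP1, hP2, hP3⟩ := hS
  refine ⟨(Set.image f) '' P, ?_, ?_, ?_⟩
  · rintro p ⟨q, hq, rfl⟩; exact htrom q (hP1 q hq)
  · rintro p ⟨q, hq, rfl⟩ p' ⟨q', hq', rfl⟩ hne
    have hqq : q ≠ q' := fun h => hne (by rw [h])
    exact (Set.disjoint_image_iff hinj).2 (hP2 hq hq' hqq)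
  · rw [← hP3, Set.image_sUnion]

def box (a b c d : ℤ) : Set Cell := {p : Cell | a ≤ p.1 ∧ p.1 ≤ b ∧ c ≤ p.2 ∧ p.2 ≤ d}

def rr (s : ℤ) : Cell → Cell := fun p => (s - p.1, p.2)
def cr (t : ℤ) : Cell → Cell := fun p => (p.1, t - p.2)

lemma rr_invol (s : ℤ) : Function.Involutive (rr s) := by
  intro ⟨x, y⟩; simp [rr]

lemma cr_invol (t : ℤ) : Function.Involutive (cr t) := by
  intro ⟨x, y⟩; simp [cr]

lemma invol_image {f : Cell → Cell} (hf : Function.Involutive f) (S : Set Cell) :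
    f '' S = f ⁻¹' S := by
  ext x
  constructor
  · rintro ⟨y, hy, rfl⟩; simpa [hf y] using hy
  · intro hx; exact ⟨f x, hx, hf x⟩

lemma trom_swap {T : Set Cell} (h : IsTromino T) : IsTromino (Prod.swap '' T) := by
  obtain ⟨i, j, c, hc, rfl⟩ := h
  refine ⟨j, i, Prod.swap c, ?_, ?_⟩
  · simp only [Set.mem_insert_iff, Set.mem_singleton_iff] at hc
    rcases hc with rfl | rfl | rfl | rfl <;> simp
  · rw [Set.image_diff Prod.swap_injective, Set.image_singleton]
    congr 1
    simp only [Set.image_insert_eq, Set.image_singleton, Prod.swap_prod_mk]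
    ext ⟨x, y⟩
    simp only [Set.mem_insert_iff, Set.mem_singleton_iff, Prod.mk.injEq]
    omega

lemma trom_rr (s : ℤ) {T : Set Cell} (h : IsTromino T) : IsTromino (rr s '' T) := by
  obtain ⟨i, j, c, hc, rfl⟩ := h
  refine ⟨s - i - 1, j, rr s c, ?_, ?_⟩
  · simp only [Set.mem_insert_iff, Set.mem_singleton_iff] at hc
    rcases hc with rfl | rfl | rfl | rfl <;> (simp [rr, Prod.ext_iff]) <;> omega
  · rw [Set.image_diff (rr_invol s).injective, Set.image_singleton]
    congr 1
    simp only [Set.image_insert_eq, Set.image_singleton, rr]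
    ext ⟨x, y⟩
    simp only [Set.mem_insert_iff, Set.mem_singleton_iff, Prod.mk.injEq]
    omega

lemma trom_cr (t : ℤ) {T : Set Cell} (h : IsTromino T) : IsTromino (cr t '' T) := by
  obtain ⟨i, j, c, hc, rfl⟩ := h
  refine ⟨i, t - j - 1, cr t c, ?_, ?_⟩
  · simp only [Set.mem_insert_iff, Set.mem_singleton_iff] at hc
    rcases hc with rfl | rfl | rfl | rfl <;> (simp [cr, Prod.ext_iff]) <;> omega
  · rw [Set.image_diff (cr_invol t).injective, Set.image_singleton]
    congr 1
    simp only [Set.image_insert_eq, Set.image_singleton, cr]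
    ext ⟨x, y⟩
    simp only [Set.mem_insert_iff, Set.mem_singleton_iff, Prod.mk.injEq]
    omega

lemma image_swap_box (a b c d : ℤ) : Prod.swap '' box a b c d = box c d a b := by
  rw [Set.image_swap_eq_preimage_swap]
  ext ⟨x, y⟩
  simp only [Set.mem_preimage, box, Prod.swap_prod_mk, Set.mem_setOf_eq]
  tauto

lemma T23 (a c : ℤ) : Tileable (box a (a + 1) c (c + 2)) := by
  have h := tileable_union (tileable_piece a c (a + 1) (c + 1)
      (by simp [Prod.ext_iff]))
    (tileable_piece a (c + 1) a (c + 1) (by simp [Prod.ext_iff]))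
    (by rw [Set.disjoint_left]; rintro ⟨x, y⟩ h h'
        simp only [Set.mem_diff, Set.mem_insert_iff, Set.mem_singleton_iff,
          Prod.mk.injEq] at h h'
        omega)
  refine tileable_congr h ?_
  ext ⟨x, y⟩
  simp only [Set.mem_union, Set.mem_diff, Set.mem_insert_iff, Set.mem_singleton_iff,
    Prod.mk.injEq, box, Set.mem_setOf_eq]
  omega

lemma T32 (a c : ℤ) : Tileable (box a (a + 2) c (c + 1)) := by
  have h := tileable_union (tileable_piece a c (a + 1) (c + 1)
      (by simp [Prod.ext_iff]))
    (tileable_piece (a + 1) c (a + 1) c (by simp [Prod.ext_iff]))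
    (by rw [Set.disjoint_left]; rintro ⟨x, y⟩ h h'
        simp only [Set.mem_diff, Set.mem_insert_iff, Set.mem_singleton_iff,
          Prod.mk.injEq] at h h'
        omega)
  refine tileable_congr h ?_
  ext ⟨x, y⟩
  simp only [Set.mem_union, Set.mem_diff, Set.mem_insert_iff, Set.mem_singleton_iff,
    Prod.mk.injEq, box, Set.mem_setOf_eq]
  omega

lemma box_disj {a b c d a' b' c' d' : ℤ} (h : b < a' ∨ d < c' ∨ b' < a ∨ d' < c) :
    Disjoint (box a b c d) (box a' b' c' d') := by
  rw [Set.disjoint_left]; rintro ⟨x, y⟩ h1 h2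
  simp only [box, Set.mem_setOf_eq] at h1 h2
  omega

lemma box_congr {a b c d a' b' c' d' : ℤ} (h1 : a = a') (h2 : b = b') (h3 : c = c')
    (h4 : d = d') : box a b c d = box a' b' c' d' := by subst h1 h2 h3 h4; rfl

lemma box_union_rows {a b c d e : ℤ} (h1 : a ≤ e + 1) (h2 : e ≤ b) :
    box a b c d = box a e c d ∪ box (e + 1) b c d := by
  ext ⟨x, y⟩
  simp only [box, Set.mem_setOf_eq, Set.mem_union]
  omega

lemma box_union_cols {a b c d e : ℤ} (h1 : c ≤ e + 1) (h2 : e ≤ d) :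
    box a b c d = box a b c e ∪ box a b (e + 1) d := by
  ext ⟨x, y⟩
  simp only [box, Set.mem_setOf_eq, Set.mem_union]
  omega

lemma strip3even : ∀ (k : ℕ) (a c : ℤ), Tileable (box a (a + 2) c (c + 2 * (k : ℤ) + 1)) := by
  intro k
  induction k with
  | zero => intro a c; exact tileable_congr (T32 a c) (box_congr rfl rfl rfl (by push_cast; ring))
  | succ k ih =>
    intro a c
    have h := tileable_union (T32 a c) (ih a (c + 2)) (box_disj (by omega))
    refine tileable_congr h ?_
    ext ⟨x, y⟩
    simp only [box, Set.mem_setOf_eq, Set.mem_union]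
    omega

lemma strip3w (a c d : ℤ) (h : c + 1 ≤ d) (hp : (d - c) % 2 = 1) :
    Tileable (box a (a + 2) c d) := by
  obtain ⟨k, rfl⟩ : ∃ k : ℕ, d = c + 2 * (k : ℤ) + 1 := ⟨((d - c - 1) / 2).toNat, by omega⟩
  exact strip3even k a c

lemma strip63 (a c : ℤ) : Tileable (box a (a + 5) c (c + 2)) := by
  have h := tileable_union (tileable_union (T23 a c) (T23 (a + 2) c) (box_disj (by omega)))
    (T23 (a + 4) c)
    (by refine Disjoint.union_left ?_ ?_ <;> exact box_disj (by omega))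
  refine tileable_congr h ?_
  ext ⟨x, y⟩
  simp only [box, Set.mem_setOf_eq, Set.mem_union]
  omega

lemma strip6even (a c d : ℤ) (h : c + 1 ≤ d) (hp : (d - c) % 2 = 1) :
    Tileable (box a (a + 5) c d) := by
  have h2 := tileable_union (strip3w a c d h hp) (strip3w (a + 3) c d h hp)
    (box_disj (by omega))
  refine tileable_congr h2 ?_
  ext ⟨x, y⟩
  simp only [box, Set.mem_setOf_eq, Set.mem_union]
  omega

lemma strip6w (a c d : ℤ) (h : c + 1 ≤ d) : Tileable (box a (a + 5) c d) := by
  by_cases hp : (d - c) % 2 = 1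
  · exact strip6even a c d h hp
  · by_cases h2 : d = c + 2
    · exact tileable_congr (strip63 a c) (box_congr rfl rfl rfl (by omega))
    · have h4 : c + 4 ≤ d := by omega
      have h5 := tileable_union (strip63 a c)
        (strip6even a (c + 3) d (by omega) (by omega)) (box_disj (by omega))
      refine tileable_congr h5 ?_
      ext ⟨x, y⟩
      simp only [box, Set.mem_setOf_eq, Set.mem_union]
      omega

lemma base45 : Tileable (rect 4 5 \ {((1:ℤ),(1:ℤ)), ((1:ℤ),(2:ℤ))}) := by
  have t0 := tileable_piece 1 3 1 4 (by norm_num)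
  have t1 := tileable_piece 1 4 2 4 (by norm_num)
  have t2 := tileable_piece 2 1 3 1 (by norm_num)
  have t3 := tileable_piece 3 1 3 2 (by norm_num)
  have t4 := tileable_piece 3 3 3 4 (by norm_num)
  have t5 := tileable_piece 3 4 4 4 (by norm_num)
  have u0 := t0
  have u1 := tileable_union u0 t1 (by rw [Set.disjoint_left]; rintro ⟨x, y⟩ h h'; simp only [Set.mem_union, Set.mem_diff, Set.mem_insert_iff, Set.mem_singleton_iff, Prod.mk.injEq] at h h'; omega)
  have u2 := tileable_union u1 t2 (by rw [Set.disjoint_left]; rintro ⟨x, y⟩ h h'; simp only [Set.mem_union, Set.mem_diff, Set.mem_insert_iff, Set.mem_singleton_iff, Prod.mk.injEq] at h h'; omega)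
  have u3 := tileable_union u2 t3 (by rw [Set.disjoint_left]; rintro ⟨x, y⟩ h h'; simp only [Set.mem_union, Set.mem_diff, Set.mem_insert_iff, Set.mem_singleton_iff, Prod.mk.injEq] at h h'; omega)
  have u4 := tileable_union u3 t4 (by rw [Set.disjoint_left]; rintro ⟨x, y⟩ h h'; simp only [Set.mem_union, Set.mem_diff, Set.mem_insert_iff, Set.mem_singleton_iff, Prod.mk.injEq] at h h'; omega)
  have u5 := tileable_union u4 t5 (by rw [Set.disjoint_left]; rintro ⟨x, y⟩ h h'; simp only [Set.mem_union, Set.mem_diff, Set.mem_insert_iff, Set.mem_singleton_iff, Prod.mk.injEq] at h h'; omega)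
  refine tileable_congr u5 ?_
  ext ⟨x, y⟩
  simp only [Set.mem_union, Set.mem_diff, Set.mem_insert_iff, Set.mem_singleton_iff,
    Prod.mk.injEq, rect, Set.mem_setOf_eq]
  constructor
  · omega
  · rintro ⟨⟨hx1, hx2, hy1, hy2⟩, hD⟩
    have hx : x = 1 ∨ x = 2 ∨ x = 3 ∨ x = 4 := by omega
    have hy : y = 1 ∨ y = 2 ∨ y = 3 ∨ y = 4 ∨ y = 5 := by omega
    rcases hx with rfl|rfl|rfl|rfl <;> rcases hy with rfl|rfl|rfl|rfl|rfl <;> (revert hD; norm_num)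

lemma base54 : Tileable (rect 5 4 \ {((1:ℤ),(1:ℤ)), ((1:ℤ),(2:ℤ))}) := by
  have t0 := tileable_piece 1 3 2 3 (by norm_num)
  have t1 := tileable_piece 2 1 3 2 (by norm_num)
  have t2 := tileable_piece 2 3 2 4 (by norm_num)
  have t3 := tileable_piece 3 2 3 3 (by norm_num)
  have t4 := tileable_piece 4 1 4 2 (by norm_num)
  have t5 := tileable_piece 4 3 4 3 (by norm_num)
  have u0 := t0
  have u1 := tileable_union u0 t1 (by rw [Set.disjoint_left]; rintro ⟨x, y⟩ h h'; simp only [Set.mem_union, Set.mem_diff, Set.mem_insert_iff, Set.mem_singleton_iff, Prod.mk.injEq] at h h'; omega)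
  have u2 := tileable_union u1 t2 (by rw [Set.disjoint_left]; rintro ⟨x, y⟩ h h'; simp only [Set.mem_union, Set.mem_diff, Set.mem_insert_iff, Set.mem_singleton_iff, Prod.mk.injEq] at h h'; omega)
  have u3 := tileable_union u2 t3 (by rw [Set.disjoint_left]; rintro ⟨x, y⟩ h h'; simp only [Set.mem_union, Set.mem_diff, Set.mem_insert_iff, Set.mem_singleton_iff, Prod.mk.injEq] at h h'; omega)
  have u4 := tileable_union u3 t4 (by rw [Set.disjoint_left]; rintro ⟨x, y⟩ h h'; simp only [Set.mem_union, Set.mem_diff, Set.mem_insert_iff, Set.mem_singleton_iff, Prod.mk.injEq] at h h'; omega)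
  have u5 := tileable_union u4 t5 (by rw [Set.disjoint_left]; rintro ⟨x, y⟩ h h'; simp only [Set.mem_union, Set.mem_diff, Set.mem_insert_iff, Set.mem_singleton_iff, Prod.mk.injEq] at h h'; omega)
  refine tileable_congr u5 ?_
  ext ⟨x, y⟩
  simp only [Set.mem_union, Set.mem_diff, Set.mem_insert_iff, Set.mem_singleton_iff,
    Prod.mk.injEq, rect, Set.mem_setOf_eq]
  constructor
  · omega
  · rintro ⟨⟨hx1, hx2, hy1, hy2⟩, hD⟩
    have hx : x = 1 ∨ x = 2 ∨ x = 3 ∨ x = 4 ∨ x = 5 := by omega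
    have hy : y = 1 ∨ y = 2 ∨ y = 3 ∨ y = 4 := by omega
    rcases hx with rfl|rfl|rfl|rfl|rfl <;> rcases hy with rfl|rfl|rfl|rfl <;> (revert hD; norm_num)

lemma base75 : Tileable (rect 7 5 \ {((1:ℤ),(1:ℤ)), ((1:ℤ),(2:ℤ))}) := by
  have t0 := tileable_piece 1 3 1 4 (by norm_num)
  have t1 := tileable_piece 1 4 2 4 (by norm_num)
  have t2 := tileable_piece 2 1 3 2 (by norm_num)
  have t3 := tileable_piece 3 2 4 2 (by norm_num)
  have t4 := tileable_piece 3 4 4 4 (by norm_num)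
  have t5 := tileable_piece 4 1 5 2 (by norm_num)
  have t6 := tileable_piece 4 4 4 5 (by norm_num)
  have t7 := tileable_piece 5 2 6 3 (by norm_num)
  have t8 := tileable_piece 6 1 6 2 (by norm_num)
  have t9 := tileable_piece 6 3 6 4 (by norm_num)
  have t10 := tileable_piece 6 4 7 4 (by norm_num)
  have u0 := t0
  have u1 := tileable_union u0 t1 (by rw [Set.disjoint_left]; rintro ⟨x, y⟩ h h'; simp only [Set.mem_union, Set.mem_diff, Set.mem_insert_iff, Set.mem_singleton_iff, Prod.mk.injEq] at h h'; omega)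
  have u2 := tileable_union u1 t2 (by rw [Set.disjoint_left]; rintro ⟨x, y⟩ h h'; simp only [Set.mem_union, Set.mem_diff, Set.mem_insert_iff, Set.mem_singleton_iff, Prod.mk.injEq] at h h'; omega)
  have u3 := tileable_union u2 t3 (by rw [Set.disjoint_left]; rintro ⟨x, y⟩ h h'; simp only [Set.mem_union, Set.mem_diff, Set.mem_insert_iff, Set.mem_singleton_iff, Prod.mk.injEq] at h h'; omega)
  have u4 := tileable_union u3 t4 (by rw [Set.disjoint_left]; rintro ⟨x, y⟩ h h'; simp only [Set.mem_union, Set.mem_diff, Set.mem_insert_iff, Set.mem_singleton_iff, Prod.mk.injEq] at h h'; omega)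
  have u5 := tileable_union u4 t5 (by rw [Set.disjoint_left]; rintro ⟨x, y⟩ h h'; simp only [Set.mem_union, Set.mem_diff, Set.mem_insert_iff, Set.mem_singleton_iff, Prod.mk.injEq] at h h'; omega)
  have u6 := tileable_union u5 t6 (by rw [Set.disjoint_left]; rintro ⟨x, y⟩ h h'; simp only [Set.mem_union, Set.mem_diff, Set.mem_insert_iff, Set.mem_singleton_iff, Prod.mk.injEq] at h h'; omega)
  have u7 := tileable_union u6 t7 (by rw [Set.disjoint_left]; rintro ⟨x, y⟩ h h'; simp only [Set.mem_union, Set.mem_diff, Set.mem_insert_iff, Set.mem_singleton_iff, Prod.mk.injEq] at h h'; omega)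
  have u8 := tileable_union u7 t8 (by rw [Set.disjoint_left]; rintro ⟨x, y⟩ h h'; simp only [Set.mem_union, Set.mem_diff, Set.mem_insert_iff, Set.mem_singleton_iff, Prod.mk.injEq] at h h'; omega)
  have u9 := tileable_union u8 t9 (by rw [Set.disjoint_left]; rintro ⟨x, y⟩ h h'; simp only [Set.mem_union, Set.mem_diff, Set.mem_insert_iff, Set.mem_singleton_iff, Prod.mk.injEq] at h h'; omega)
  have u10 := tileable_union u9 t10 (by rw [Set.disjoint_left]; rintro ⟨x, y⟩ h h'; simp only [Set.mem_union, Set.mem_diff, Set.mem_insert_iff, Set.mem_singleton_iff, Prod.mk.injEq] at h h'; omega)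
  refine tileable_congr u10 ?_
  ext ⟨x, y⟩
  simp only [Set.mem_union, Set.mem_diff, Set.mem_insert_iff, Set.mem_singleton_iff,
    Prod.mk.injEq, rect, Set.mem_setOf_eq]
  constructor
  · omega
  · rintro ⟨⟨hx1, hx2, hy1, hy2⟩, hD⟩
    have hx : x = 1 ∨ x = 2 ∨ x = 3 ∨ x = 4 ∨ x = 5 ∨ x = 6 ∨ x = 7 := by omega
    have hy : y = 1 ∨ y = 2 ∨ y = 3 ∨ y = 4 ∨ y = 5 := by omega
    rcases hx with rfl|rfl|rfl|rfl|rfl|rfl|rfl <;> rcases hy with rfl|rfl|rfl|rfl|rfl <;> (revert hD; norm_num)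

lemma base57 : Tileable (rect 5 7 \ {((1:ℤ),(1:ℤ)), ((1:ℤ),(2:ℤ))}) := by
  have t0 := tileable_piece 1 3 2 3 (by norm_num)
  have t1 := tileable_piece 1 5 1 6 (by norm_num)
  have t2 := tileable_piece 1 6 2 6 (by norm_num)
  have t3 := tileable_piece 2 1 2 2 (by norm_num)
  have t4 := tileable_piece 2 2 3 2 (by norm_num)
  have t5 := tileable_piece 3 4 4 4 (by norm_num)
  have t6 := tileable_piece 3 6 4 6 (by norm_num)
  have t7 := tileable_piece 4 1 4 2 (by norm_num)
  have t8 := tileable_piece 4 2 5 2 (by norm_num)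
  have t9 := tileable_piece 4 4 4 5 (by norm_num)
  have t10 := tileable_piece 4 6 4 7 (by norm_num)
  have u0 := t0
  have u1 := tileable_union u0 t1 (by rw [Set.disjoint_left]; rintro ⟨x, y⟩ h h'; simp only [Set.mem_union, Set.mem_diff, Set.mem_insert_iff, Set.mem_singleton_iff, Prod.mk.injEq] at h h'; omega)
  have u2 := tileable_union u1 t2 (by rw [Set.disjoint_left]; rintro ⟨x, y⟩ h h'; simp only [Set.mem_union, Set.mem_diff, Set.mem_insert_iff, Set.mem_singleton_iff, Prod.mk.injEq] at h h'; omega)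
  have u3 := tileable_union u2 t3 (by rw [Set.disjoint_left]; rintro ⟨x, y⟩ h h'; simp only [Set.mem_union, Set.mem_diff, Set.mem_insert_iff, Set.mem_singleton_iff, Prod.mk.injEq] at h h'; omega)
  have u4 := tileable_union u3 t4 (by rw [Set.disjoint_left]; rintro ⟨x, y⟩ h h'; simp only [Set.mem_union, Set.mem_diff, Set.mem_insert_iff, Set.mem_singleton_iff, Prod.mk.injEq] at h h'; omega)
  have u5 := tileable_union u4 t5 (by rw [Set.disjoint_left]; rintro ⟨x, y⟩ h h'; simp only [Set.mem_union, Set.mem_diff, Set.mem_insert_iff, Set.mem_singleton_iff, Prod.mk.injEq] at h h'; omega)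
  have u6 := tileable_union u5 t6 (by rw [Set.disjoint_left]; rintro ⟨x, y⟩ h h'; simp only [Set.mem_union, Set.mem_diff, Set.mem_insert_iff, Set.mem_singleton_iff, Prod.mk.injEq] at h h'; omega)
  have u7 := tileable_union u6 t7 (by rw [Set.disjoint_left]; rintro ⟨x, y⟩ h h'; simp only [Set.mem_union, Set.mem_diff, Set.mem_insert_iff, Set.mem_singleton_iff, Prod.mk.injEq] at h h'; omega)
  have u8 := tileable_union u7 t8 (by rw [Set.disjoint_left]; rintro ⟨x, y⟩ h h'; simp only [Set.mem_union, Set.mem_diff, Set.mem_insert_iff, Set.mem_singleton_iff, Prod.mk.injEq] at h h'; omega)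
  have u9 := tileable_union u8 t9 (by rw [Set.disjoint_left]; rintro ⟨x, y⟩ h h'; simp only [Set.mem_union, Set.mem_diff, Set.mem_insert_iff, Set.mem_singleton_iff, Prod.mk.injEq] at h h'; omega)
  have u10 := tileable_union u9 t10 (by rw [Set.disjoint_left]; rintro ⟨x, y⟩ h h'; simp only [Set.mem_union, Set.mem_diff, Set.mem_insert_iff, Set.mem_singleton_iff, Prod.mk.injEq] at h h'; omega)
  refine tileable_congr u10 ?_
  ext ⟨x, y⟩
  simp only [Set.mem_union, Set.mem_diff, Set.mem_insert_iff, Set.mem_singleton_iff,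
    Prod.mk.injEq, rect, Set.mem_setOf_eq]
  constructor
  · omega
  · rintro ⟨⟨hx1, hx2, hy1, hy2⟩, hD⟩
    have hx : x = 1 ∨ x = 2 ∨ x = 3 ∨ x = 4 ∨ x = 5 := by omega
    have hy : y = 1 ∨ y = 2 ∨ y = 3 ∨ y = 4 ∨ y = 5 ∨ y = 6 ∨ y = 7 := by omega
    rcases hx with rfl|rfl|rfl|rfl|rfl <;> rcases hy with rfl|rfl|rfl|rfl|rfl|rfl|rfl <;> (revert hD; norm_num)

lemma core : ∀ N : ℕ, ∀ m n : ℤ, m + n ≤ (N : ℤ) → 4 ≤ m → 4 ≤ n → m * n % 3 = 2 →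
    Tileable (rect m n \ {((1:ℤ),(1:ℤ)), ((1:ℤ),(2:ℤ))}) := by
  intro N
  induction N with
  | zero => intro m n h hm hn _; exfalso; omega
  | succ N ih =>
    intro m n hN hm hn hmod
    by_cases hb : n % 2 = 0 ∧ 7 ≤ m
    · -- peel bottom 3 rows
      have hmod' : (m - 3) * n % 3 = 2 := by
        have e : (m - 3) * n = m * n - 3 * n := by ring
        have h0 : (3 * n) % 3 = 0 := by omega
        rw [e, Int.sub_emod, h0, hmod]
        decide
      have h1 := ih (m - 3) n (by omega) (by omega) hn hmod'
      have h2 : Tileable (box (m - 2) m 1 n) :=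
        tileable_congr (strip3w (m - 2) 1 n (by omega) (by omega))
          (box_congr rfl (by ring) rfl rfl)
      have h3 := tileable_union h1 h2 (by
        rw [Set.disjoint_left]; rintro ⟨x, y⟩ h h'
        simp only [Set.mem_diff, rect, box, Set.mem_setOf_eq] at h h'
        omega)
      refine tileable_congr h3 ?_
      ext ⟨x, y⟩
      simp only [Set.mem_union, Set.mem_diff, rect, box, Set.mem_setOf_eq,
        Set.mem_insert_iff, Set.mem_singleton_iff, Prod.mk.injEq]
      omega
    · by_cases ha : m % 2 = 0 ∧ 7 ≤ n
      · -- peel right 3 columns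
        have hmod' : m * (n - 3) % 3 = 2 := by
          have e : m * (n - 3) = m * n - 3 * m := by ring
          have h0 : (3 * m) % 3 = 0 := by omega
          rw [e, Int.sub_emod, h0, hmod]
          decide
        have h1 := ih m (n - 3) (by omega) hm (by omega) hmod'
        have h2 : Tileable (box 1 m (n - 2) n) := by
          have hs : Tileable (box (n - 2) n 1 m) :=
            tileable_congr (strip3w (n - 2) 1 m (by omega) (by omega))
              (box_congr rfl (by ring) rfl rfl)
          have hs2 := tileable_image Prod.swap Prod.swap_injective
            (fun _ ht => trom_swap ht) hs
          rwa [image_swap_box] at hs2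
        have h3 := tileable_union h1 h2 (by
          rw [Set.disjoint_left]; rintro ⟨x, y⟩ h h'
          simp only [Set.mem_diff, rect, box, Set.mem_setOf_eq] at h h'
          omega)
        refine tileable_congr h3 ?_
        ext ⟨x, y⟩
        simp only [Set.mem_union, Set.mem_diff, rect, box, Set.mem_setOf_eq,
          Set.mem_insert_iff, Set.mem_singleton_iff, Prod.mk.injEq]
        omega
      · by_cases hc : 10 ≤ m
        · -- peel bottom 6 rows
          have hmod' : (m - 6) * n % 3 = 2 := by
            have e : (m - 6) * n = m * n - 6 * n := by ring
            have h0 : (6 * n) % 3 = 0 := by omega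
            rw [e, Int.sub_emod, h0, hmod]
            decide
          have h1 := ih (m - 6) n (by omega) (by omega) hn hmod'
          have h2 : Tileable (box (m - 5) m 1 n) :=
            tileable_congr (strip6w (m - 5) 1 n (by omega))
              (box_congr rfl (by ring) rfl rfl)
          have h3 := tileable_union h1 h2 (by
            rw [Set.disjoint_left]; rintro ⟨x, y⟩ h h'
            simp only [Set.mem_diff, rect, box, Set.mem_setOf_eq] at h h'
            omega)
          refine tileable_congr h3 ?_
          ext ⟨x, y⟩
          simp only [Set.mem_union, Set.mem_diff, rect, box, Set.mem_setOf_eq,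
            Set.mem_insert_iff, Set.mem_singleton_iff, Prod.mk.injEq]
          omega
        · by_cases hd : 10 ≤ n
          · -- peel right 6 columns
            have hmod' : m * (n - 6) % 3 = 2 := by
              have e : m * (n - 6) = m * n - 6 * m := by ring
              have h0 : (6 * m) % 3 = 0 := by omega
              rw [e, Int.sub_emod, h0, hmod]
              decide
            have h1 := ih m (n - 6) (by omega) hm (by omega) hmod'
            have h2 : Tileable (box 1 m (n - 5) n) := by
              have hs : Tileable (box (n - 5) n 1 m) :=
                tileable_congr (strip6w (n - 5) 1 m (by omega))
                  (box_congr rfl (by ring) rfl rfl)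
              have hs2 := tileable_image Prod.swap Prod.swap_injective
                (fun _ ht => trom_swap ht) hs
              rwa [image_swap_box] at hs2
            have h3 := tileable_union h1 h2 (by
              rw [Set.disjoint_left]; rintro ⟨x, y⟩ h h'
              simp only [Set.mem_diff, rect, box, Set.mem_setOf_eq] at h h'
              omega)
            refine tileable_congr h3 ?_
            ext ⟨x, y⟩
            simp only [Set.mem_union, Set.mem_diff, rect, box, Set.mem_setOf_eq,
              Set.mem_insert_iff, Set.mem_singleton_iff, Prod.mk.injEq]
            omega
          · have hm9 : m ≤ 9 := by omega
            have hn9 : n ≤ 9 := by omega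
            interval_cases m <;> interval_cases n <;>
              first
                | (exfalso; omega)
                | exact base45
                | exact base54
                | exact base75
                | exact base57

/-- Domino-Deficient Dog-Eared Rectangle Theorem. -/
theorem domino_deficient_dog_eared (m n : ℤ) (hm : 4 ≤ m) (hn : 4 ≤ n)
    (hmod : m * n % 3 = 2) (D : Set Cell) (hD : IsDomino D) (hsub : D ⊆ rect m n)
    (hcorner : ((1, 1) : Cell) ∈ D ∨ ((1, n) : Cell) ∈ D ∨
      ((m, 1) : Cell) ∈ D ∨ ((m, n) : Cell) ∈ D) :
    Tileable (rect m n \ D) := by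
  have coreH : ∀ m' n' : ℤ, 4 ≤ m' → 4 ≤ n' → m' * n' % 3 = 2 →
      Tileable (rect m' n' \ {((1:ℤ),(1:ℤ)), ((1:ℤ),(2:ℤ))}) := fun m' n' h1 h2 h3 =>
    core (m' + n').toNat m' n' (by omega) h1 h2 h3
  have coreV : ∀ m' n' : ℤ, 4 ≤ m' → 4 ≤ n' → m' * n' % 3 = 2 →
      Tileable (rect m' n' \ {((1:ℤ),(1:ℤ)), ((2:ℤ),(1:ℤ))}) := by
    intro m' n' h1 h2 h3
    have h := tileable_image Prod.swap Prod.swap_injective (fun _ ht => trom_swap ht)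
      (coreH n' m' h2 h1 (by rw [mul_comm]; exact h3))
    refine tileable_congr h ?_
    rw [Set.image_swap_eq_preimage_swap]
    ext ⟨x, y⟩
    simp only [Set.mem_preimage, Prod.swap_prod_mk, Set.mem_diff, rect, Set.mem_setOf_eq,
      Set.mem_insert_iff, Set.mem_singleton_iff, Prod.mk.injEq]
    omega
  rcases hD with ⟨i, j, rfl⟩ | ⟨i, j, rfl⟩
  · -- horizontal domino {(i,j), (i,j+1)}
    have hin1 : 1 ≤ i ∧ i ≤ m ∧ 1 ≤ j ∧ j ≤ n := hsub (Set.mem_insert _ _)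
    have hin2 : 1 ≤ i ∧ i ≤ m ∧ 1 ≤ j + 1 ∧ j + 1 ≤ n :=
      hsub (Set.mem_insert_of_mem _ rfl)
    simp only [Set.mem_insert_iff, Set.mem_singleton_iff, Prod.mk.injEq] at hcorner
    rcases hcorner with (⟨h1, h2⟩ | ⟨h1, h2⟩) | (⟨h1, h2⟩ | ⟨h1, h2⟩) |
        (⟨h1, h2⟩ | ⟨h1, h2⟩) | (⟨h1, h2⟩ | ⟨h1, h2⟩)
    · -- (1,1) = (i,j)
      refine tileable_congr (coreH m n hm hn hmod) ?_
      ext ⟨x, y⟩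
      simp only [Set.mem_diff, rect, Set.mem_setOf_eq, Set.mem_insert_iff,
        Set.mem_singleton_iff, Prod.mk.injEq]
      omega
    · exfalso; omega
    · exfalso; omega
    · -- (1,n) = (i,j+1) : D = {(1,n-1),(1,n)}
      have h := tileable_image (cr (n + 1)) (cr_invol (n + 1)).injective
        (fun _ ht => trom_cr _ ht) (coreH m n hm hn hmod)
      refine tileable_congr h ?_
      rw [invol_image (cr_invol (n + 1))]
      ext ⟨x, y⟩
      simp only [Set.mem_preimage, cr, Set.mem_diff, rect, Set.mem_setOf_eq,
        Set.mem_insert_iff, Set.mem_singleton_iff, Prod.mk.injEq]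
      omega
    · -- (m,1) = (i,j) : D = {(m,1),(m,2)}
      have h := tileable_image (rr (m + 1)) (rr_invol (m + 1)).injective
        (fun _ ht => trom_rr _ ht) (coreH m n hm hn hmod)
      refine tileable_congr h ?_
      rw [invol_image (rr_invol (m + 1))]
      ext ⟨x, y⟩
      simp only [Set.mem_preimage, rr, Set.mem_diff, rect, Set.mem_setOf_eq,
        Set.mem_insert_iff, Set.mem_singleton_iff, Prod.mk.injEq]
      omega
    · exfalso; omega
    · exfalso; omega
    · -- (m,n) = (i,j+1) : D = {(m,n-1),(m,n)}
      have h0 := tileable_image (cr (n + 1)) (cr_invol (n + 1)).injective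
        (fun _ ht => trom_cr _ ht) (coreH m n hm hn hmod)
      have h := tileable_image (rr (m + 1)) (rr_invol (m + 1)).injective
        (fun _ ht => trom_rr _ ht) h0
      refine tileable_congr h ?_
      rw [invol_image (rr_invol (m + 1)), invol_image (cr_invol (n + 1))]
      ext ⟨x, y⟩
      simp only [Set.mem_preimage, rr, cr, Set.mem_diff, rect, Set.mem_setOf_eq,
        Set.mem_insert_iff, Set.mem_singleton_iff, Prod.mk.injEq]
      omega
  · -- vertical domino {(i,j), (i+1,j)}
    have hin1 : 1 ≤ i ∧ i ≤ m ∧ 1 ≤ j ∧ j ≤ n := hsub (Set.mem_insert _ _)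
    have hin2 : 1 ≤ i + 1 ∧ i + 1 ≤ m ∧ 1 ≤ j ∧ j ≤ n :=
      hsub (Set.mem_insert_of_mem _ rfl)
    simp only [Set.mem_insert_iff, Set.mem_singleton_iff, Prod.mk.injEq] at hcorner
    rcases hcorner with (⟨h1, h2⟩ | ⟨h1, h2⟩) | (⟨h1, h2⟩ | ⟨h1, h2⟩) |
        (⟨h1, h2⟩ | ⟨h1, h2⟩) | (⟨h1, h2⟩ | ⟨h1, h2⟩)
    · -- (1,1) = (i,j)
      refine tileable_congr (coreV m n hm hn hmod) ?_
      ext ⟨x, y⟩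
      simp only [Set.mem_diff, rect, Set.mem_setOf_eq, Set.mem_insert_iff,
        Set.mem_singleton_iff, Prod.mk.injEq]
      omega
    · exfalso; omega
    · -- (1,n) = (i,j) : D = {(1,n),(2,n)}
      have h := tileable_image (cr (n + 1)) (cr_invol (n + 1)).injective
        (fun _ ht => trom_cr _ ht) (coreV m n hm hn hmod)
      refine tileable_congr h ?_
      rw [invol_image (cr_invol (n + 1))]
      ext ⟨x, y⟩
      simp only [Set.mem_preimage, cr, Set.mem_diff, rect, Set.mem_setOf_eq,
        Set.mem_insert_iff, Set.mem_singleton_iff, Prod.mk.injEq]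
      omega
    · exfalso; omega
    · exfalso; omega
    · -- (m,1) = (i+1,j) : D = {(m-1,1),(m,1)}
      have h := tileable_image (rr (m + 1)) (rr_invol (m + 1)).injective
        (fun _ ht => trom_rr _ ht) (coreV m n hm hn hmod)
      refine tileable_congr h ?_
      rw [invol_image (rr_invol (m + 1))]
      ext ⟨x, y⟩
      simp only [Set.mem_preimage, rr, Set.mem_diff, rect, Set.mem_setOf_eq,
        Set.mem_insert_iff, Set.mem_singleton_iff, Prod.mk.injEq]
      omega
    · exfalso; omega
    · -- (m,n) = (i+1,j) : D = {(m-1,n),(m,n)}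
      have h0 := tileable_image (cr (n + 1)) (cr_invol (n + 1)).injective
        (fun _ ht => trom_cr _ ht) (coreV m n hm hn hmod)
      have h := tileable_image (rr (m + 1)) (rr_invol (m + 1)).injective
        (fun _ ht => trom_rr _ ht) h0
      refine tileable_congr h ?_
      rw [invol_image (rr_invol (m + 1)), invol_image (cr_invol (n + 1))]
      ext ⟨x, y⟩
      simp only [Set.mem_preimage, rr, cr, Set.mem_diff, rect, Set.mem_setOf_eq,
        Set.mem_insert_iff, Set.mem_singleton_iff, Prod.mk.injEq]
      omega
end

section
/- For every integer t ≥ 1, the number of partitions of the rectangle R(2,3t+1) into 2t L-trominoes and exactly one horizontal domino equals t·2^t. -/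
/-!
The piece covering the top-left cell of a 2-row strip tiled by L-trominoes and at most one
horizontal domino also covers the cell below it, and reaches into the second column in one
row `r ∈ {1, 2}`. Following the next one or two pieces shows that the tiling begins either
with two trominoes filling the first three columns or with tromino, domino, tromino filling
the first four, each in two ways. Removing this block leaves a tiling of a shorter strip, so
the numbers `T s` of tromino tilings of width `3s` and `M t` of tilings of width `3t + 1`
with one domino satisfy `T (s + 1) = 2 T s` and `M (t + 1) = 2 M t + 2 T t`, with
`T 0 = 1` and `M 0 = 0`; hence `T s = 2 ^ s` and `M t = t 2 ^ t`.
-/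

lemma ncard_sep_union {α : Type*} {B Q : Set α} (h : Disjoint B Q) (hB : B.Finite) (hQ : Q.Finite)
    (X : α → Prop) : {p ∈ B ∪ Q | X p}.ncard = {p ∈ B | X p}.ncard + {p ∈ Q | X p}.ncard := by
  rw [show {p ∈ B ∪ Q | X p} = {p ∈ B | X p} ∪ {p ∈ Q | X p} from Set.sep_union,
    Set.ncard_union_eq (h.mono (Set.sep_subset _ _) (Set.sep_subset _ _))
      (hB.subset (Set.sep_subset _ _)) (hQ.subset (Set.sep_subset _ _))]

namespace TwoRow

def strip (a : ℤ) (n : ℕ) : Set Cell := {c | 1 ≤ c.1 ∧ c.1 ≤ 2 ∧ a ≤ c.2 ∧ c.2 < a + n}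

def block (i j : ℤ) : Set Cell := {(i, j), (i + 1, j), (i, j + 1), (i + 1, j + 1)}

def hdomino (i j : ℤ) : Set Cell := {(i, j), (i, j + 1)}

lemma finite_block (i j : ℤ) : (block i j).Finite := by simp [block]

lemma finite_hdomino (i j : ℤ) : (hdomino i j).Finite := by simp [hdomino]

lemma finite_strip (a : ℤ) (n : ℕ) : (strip a n).Finite :=
  ((Set.finite_Icc 1 2).prod (Set.finite_Ico a (a + n))).subset fun c hc => by
    simp only [strip, Set.mem_ofPred_eq] at hc
    exact ⟨⟨hc.1, hc.2.1⟩, hc.2.2⟩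

lemma isTromino_iff {p : Set Cell} :
    IsTromino p ↔ ∃ i j : ℤ, ∃ c ∈ block i j, p = block i j \ {c} := Iff.rfl

lemma isTromino_block_diff {i j : ℤ} {c : Cell} (hc : c ∈ block i j) :
    IsTromino (block i j \ {c}) :=
  ⟨i, j, c, hc, rfl⟩

lemma isHDomino_hdomino (i j : ℤ) : IsHDomino (hdomino i j) := ⟨i, j, rfl⟩

lemma diagonal_mem_block_diff (i j : ℤ) (c : Cell) :
    (i, j) ∈ block i j \ {c} ∧ (i + 1, j + 1) ∈ block i j \ {c} ∨
      (i + 1, j) ∈ block i j \ {c} ∧ (i, j + 1) ∈ block i j \ {c} := by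
  simp only [block, Set.mem_sdiff, Set.mem_insert_iff, Set.mem_singleton_iff, Prod.ext_iff]
  lia

lemma nonempty_of_isTromino {p : Set Cell} (hp : IsTromino p) : p.Nonempty := by
  obtain ⟨i, j, c, -, rfl⟩ := isTromino_iff.mp hp
  obtain ⟨h, -⟩ | ⟨h, -⟩ := diagonal_mem_block_diff i j c
  exacts [⟨_, h⟩, ⟨_, h⟩]

lemma not_isTromino_of_isHDomino {p : Set Cell} (hp : IsHDomino p) : ¬ IsTromino p := by
  intro ht
  obtain ⟨i, j, c, -, h⟩ := isTromino_iff.mp ht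
  obtain ⟨i', j', rfl⟩ := hp
  obtain ⟨h₁, h₂⟩ | ⟨h₁, h₂⟩ := diagonal_mem_block_diff i j c <;>
  · rw [← h] at h₁ h₂
    simp only [Set.mem_insert_iff, Set.mem_singleton_iff, Prod.mk.injEq] at h₁ h₂
    omega

lemma eq_block_diff_or_eq_hdomino {q : Set Cell} {b r : ℤ} (hq : IsTromino q ∨ IsHDomino q)
    (hrows : ∀ c ∈ q, 1 ≤ c.1 ∧ c.1 ≤ 2) (hleft : ∀ c ∈ q, b ≤ c.2) (hrb : (r, b) ∈ q) :
    (∃ c ∈ block 1 b, q = block 1 b \ {c}) ∨ q = hdomino r b := by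
  rw [isTromino_iff] at hq
  rcases hq with ⟨i, j, c, hc, rfl⟩ | ⟨i, j, rfl⟩
  · left
    obtain ⟨rfl, rfl⟩ : i = 1 ∧ j = b := by
      have hb : b = j ∨ b = j + 1 := by
        simp only [block, Set.mem_sdiff, Set.mem_insert_iff, Set.mem_singleton_iff,
          Prod.mk.injEq] at hrb
        omega
      obtain ⟨h₁, h₂⟩ | ⟨h₁, h₂⟩ := diagonal_mem_block_diff i j c <;>
      · have := hrows _ h₁; have := hrows _ h₂; have := hleft _ h₁
        lia
    exact ⟨c, hc, rfl⟩
  · right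
    simp only [Set.mem_insert_iff, Set.mem_singleton_iff, Prod.mk.injEq] at hrb
    have := hleft (i, j) (by simp)
    obtain ⟨rfl, rfl⟩ : i = r ∧ j = b := by omega
    rfl

lemma eq_block_diff_of_mem_of_not_mem {q : Set Cell} {b r : ℤ} (hr : r ∈ ({1, 2} : Set ℤ))
    (hq : IsTromino q ∨ IsHDomino q) (hrows : ∀ c ∈ q, 1 ≤ c.1 ∧ c.1 ≤ 2)
    (hleft : ∀ c ∈ q, b ≤ c.2) (hrb : (r, b) ∈ q) (hopp : (3 - r, b) ∉ q) :
    q = block 1 b \ {(3 - r, b)} ∨ q = hdomino r b := by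
  refine (eq_block_diff_or_eq_hdomino hq hrows hleft hrb).imp_left ?_
  rintro ⟨c, hc, rfl⟩
  obtain rfl : c = (3 - r, b) := by
    by_contra hne
    refine hopp ⟨?_, Ne.symm hne⟩
    obtain rfl | rfl := hr <;> simp [block]
  rfl

lemma exists_eq_block_diff_of_mem_of_mem {q : Set Cell} {b : ℤ}
    (hq : IsTromino q ∨ IsHDomino q) (hrows : ∀ c ∈ q, 1 ≤ c.1 ∧ c.1 ≤ 2)
    (hleft : ∀ c ∈ q, b ≤ c.2) (h₁ : (1, b) ∈ q) (h₂ : (2, b) ∈ q) :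
    ∃ r ∈ ({1, 2} : Set ℤ), q = block 1 b \ {(3 - r, b + 1)} := by
  rcases eq_block_diff_or_eq_hdomino hq hrows hleft h₁ with ⟨c, hc, rfl⟩ | rfl
  · simp only [block, Set.mem_sdiff, Set.mem_insert_iff, Set.mem_singleton_iff] at hc h₁ h₂
    rcases hc with rfl | rfl | rfl | rfl
    · exact absurd rfl h₁.2
    · exact absurd rfl h₂.2
    · exact ⟨2, by simp, by norm_num⟩
    · exact ⟨1, by simp, by norm_num⟩
  · simp [hdomino] at h₂

structure IsTiling (P : Set (Set Cell)) (S : Set Cell) (d k : ℕ) : Prop where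
  pairwiseDisjoint : P.PairwiseDisjoint id
  sUnion_eq : ⋃₀ P = S
  isTromino_or_isHDomino : ∀ p ∈ P, IsTromino p ∨ IsHDomino p
  ncard_hdomino : {p ∈ P | IsHDomino p}.ncard = d
  ncard_tromino : {p ∈ P | IsTromino p}.ncard = k

lemma isMixedTiling_iff {P : Set (Set Cell)} {S : Set Cell} {k : ℕ} :
    IsMixedTiling P S IsHDomino k ↔ IsTiling P S 1 k :=
  ⟨fun ⟨h₁, h₂, h₃, h₄, h₅⟩ => ⟨h₁, h₂, h₃, h₄, h₅⟩,
    fun ⟨h₁, h₂, h₃, h₄, h₅⟩ => ⟨h₁, h₂, h₃, h₄, h₅⟩⟩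

namespace IsTiling

variable {P B Q : Set (Set Cell)} {S T : Set Cell} {d d' k k' : ℕ}

lemma subset (hP : IsTiling P S d k) {p : Set Cell} (hp : p ∈ P) : p ⊆ S :=
  hP.sUnion_eq ▸ Set.subset_sUnion_of_mem hp

lemma exists_mem (hP : IsTiling P S d k) {c : Cell} (hc : c ∈ S) : ∃ p ∈ P, c ∈ p := by
  rwa [← hP.sUnion_eq, Set.mem_sUnion] at hc

lemma eq_of_mem (hP : IsTiling P S d k) {p q : Set Cell} (hp : p ∈ P) (hq : q ∈ P) {c : Cell}
    (hcp : c ∈ p) (hcq : c ∈ q) : p = q :=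
  hP.pairwiseDisjoint.elim_set hp hq c hcp hcq

lemma nonempty (hP : IsTiling P S d k) {p : Set Cell} (hp : p ∈ P) : p.Nonempty := by
  rcases hP.isTromino_or_isHDomino p hp with h | ⟨i, j, rfl⟩
  exacts [nonempty_of_isTromino h, ⟨(i, j), by simp⟩]

lemma finite (hP : IsTiling P S d k) (hS : S.Finite) : P.Finite :=
  hS.finite_subsets.subset fun _ hp => hP.subset hp

lemma hdomino_unique (hP : IsTiling P S d k) (hS : S.Finite) (hd : d ≤ 1) {p q : Set Cell}
    (hp : p ∈ P) (hq : q ∈ P) (hdp : IsHDomino p) (hdq : IsHDomino q) : p = q :=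
  (Set.ncard_le_one ((hP.finite hS).subset (Set.sep_subset _ _))).mp
    (hP.ncard_hdomino ▸ hd) p ⟨hp, hdp⟩ q ⟨hq, hdq⟩

lemma not_subset_of_disjoint (hQ : IsTiling Q T d k) (hST : Disjoint S T) {p : Set Cell}
    (hp : p ∈ Q) : ¬ p ⊆ S := by
  obtain ⟨c, hc⟩ := hQ.nonempty hp
  exact fun hpS => Set.disjoint_left.mp hST (hpS hc) (hQ.subset hp hc)

lemma union (hB : IsTiling B S d k) (hQ : IsTiling Q T d' k') (hS : S.Finite) (hT : T.Finite)
    (hST : Disjoint S T) : IsTiling (B ∪ Q) (S ∪ T) (d + d') (k + k') := by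
  have hBQ : Disjoint B Q := Set.disjoint_left.mpr fun p hpB hpQ =>
    hQ.not_subset_of_disjoint hST hpQ (hB.subset hpB)
  refine ⟨?_, by rw [Set.sUnion_union, hB.sUnion_eq, hQ.sUnion_eq], ?_, ?_, ?_⟩
  · exact Set.pairwiseDisjoint_union.mpr ⟨hB.pairwiseDisjoint, hQ.pairwiseDisjoint,
      fun p hp q hq _ => hST.mono (hB.subset hp) (hQ.subset hq)⟩
  · rintro p (hp | hp)
    exacts [hB.isTromino_or_isHDomino p hp, hQ.isTromino_or_isHDomino p hp]
  · rw [ncard_sep_union hBQ (hB.finite hS) (hQ.finite hT), hB.ncard_hdomino, hQ.ncard_hdomino]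
  · rw [ncard_sep_union hBQ (hB.finite hS) (hQ.finite hT), hB.ncard_tromino, hQ.ncard_tromino]

lemma sdiff (hP : IsTiling P S (d + d') (k + k')) (hBP : B ⊆ P) (hB : IsTiling B T d' k')
    (hS : S.Finite) : IsTiling (P \ B) (S \ T) d k := by
  have hcount (X : Set Cell → Prop) :
      {p ∈ P | X p}.ncard = {p ∈ B | X p}.ncard + {p ∈ P \ B | X p}.ncard := by
    conv_lhs => rw [← Set.union_sdiff_cancel hBP]
    exact ncard_sep_union Set.disjoint_sdiff_right ((hP.finite hS).subset hBP)
      ((hP.finite hS).subset Set.sdiff_subset) X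
  refine ⟨hP.pairwiseDisjoint.subset Set.sdiff_subset, ?_,
    fun p hp => hP.isTromino_or_isHDomino p hp.1,
    by have := hcount IsHDomino; rw [hP.ncard_hdomino, hB.ncard_hdomino] at this; omega,
    by have := hcount IsTromino; rw [hP.ncard_tromino, hB.ncard_tromino] at this; omega⟩
  ext c
  simp only [Set.mem_sUnion, Set.mem_sdiff]
  constructor
  · rintro ⟨p, ⟨hpP, hpB⟩, hcp⟩
    refine ⟨hP.subset hpP hcp, fun hcT => ?_⟩
    obtain ⟨q, hqB, hcq⟩ := hB.exists_mem hcT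
    exact hpB (hP.eq_of_mem hpP (hBP hqB) hcp hcq ▸ hqB)
  · rintro ⟨hcS, hcT⟩
    obtain ⟨p, hpP, hcp⟩ := hP.exists_mem hcS
    exact ⟨p, ⟨hpP, fun hpB => hcT (hB.subset hpB hcp)⟩, hcp⟩

lemma sep_subset_union_eq (hQ : IsTiling Q T d k) (hB : IsTiling B S d' k') (hST : Disjoint S T) :
    {p ∈ Q ∪ B | p ⊆ S} = B := by
  ext p
  simp only [Set.mem_ofPred_eq, Set.mem_union]
  exact ⟨fun ⟨hp, hpS⟩ => hp.resolve_left fun hpQ => hQ.not_subset_of_disjoint hST hpQ hpS,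
    fun hp => ⟨Or.inr hp, hB.subset hp⟩⟩

lemma eq_and_eq_of_union_eq {Q' B' : Set (Set Cell)} {d₁ d₂ d₃ d₄ k₁ k₂ k₃ k₄ : ℕ}
    (hQ : IsTiling Q T d₁ k₁) (hQ' : IsTiling Q' T d₂ k₂) (hB : IsTiling B S d₃ k₃)
    (hB' : IsTiling B' S d₄ k₄) (hST : Disjoint S T) (h : Q ∪ B = Q' ∪ B') : Q = Q' ∧ B = B' := by
  have hBB' : B = B' := by
    rw [← hQ.sep_subset_union_eq hB hST, h, hQ'.sep_subset_union_eq hB' hST]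
  have hdisj {Q B : Set (Set Cell)} {d k d' k'} (hQ : IsTiling Q T d k) (hB : IsTiling B S d' k') :
      Q ∩ B ⊆ ∅ := fun p hp => hQ.not_subset_of_disjoint hST hp.1 (hB.subset hp.2)
  refine ⟨?_, hBB'⟩
  rw [← Set.union_sdiff_cancel_right (hdisj hQ hB), h, hBB',
    Set.union_sdiff_cancel_right (hdisj hQ' hB')]

lemma not_isHDomino (hP : IsTiling P S 0 k) (hS : S.Finite) {p : Set Cell} (hp : p ∈ P) :
    ¬ IsHDomino p := fun hdp =>
  ((Set.ncard_eq_zero ((hP.finite hS).subset (Set.sep_subset _ _))).mp hP.ncard_hdomino).subset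
    ⟨hp, hdp⟩

end IsTiling

lemma isTiling_empty : IsTiling ∅ ∅ 0 0 :=
  ⟨Set.pairwiseDisjoint_empty, Set.sUnion_empty, by simp, by simp, by simp⟩

lemma isTiling_singleton_of_isTromino {p : Set Cell} (hp : IsTromino p) : IsTiling {p} p 0 1 where
  pairwiseDisjoint := Set.pairwiseDisjoint_singleton _ _
  sUnion_eq := Set.sUnion_singleton p
  isTromino_or_isHDomino q hq := hq ▸ Or.inl hp
  ncard_hdomino := by
    rw [Set.sep_eq_empty_iff_mem_false.mpr fun q hq hd => not_isTromino_of_isHDomino hd (hq ▸ hp),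
      Set.ncard_empty]
  ncard_tromino := by rw [Set.sep_eq_self_iff_mem_true.mpr fun q hq => hq ▸ hp, Set.ncard_singleton]

lemma isTiling_singleton_of_isHDomino {p : Set Cell} (hp : IsHDomino p) : IsTiling {p} p 1 0 where
  pairwiseDisjoint := Set.pairwiseDisjoint_singleton _ _
  sUnion_eq := Set.sUnion_singleton p
  isTromino_or_isHDomino q hq := hq ▸ Or.inr hp
  ncard_hdomino := by rw [Set.sep_eq_self_iff_mem_true.mpr fun q hq => hq ▸ hp, Set.ncard_singleton]
  ncard_tromino := by
    rw [Set.sep_eq_empty_iff_mem_false.mpr fun q hq ht => not_isTromino_of_isHDomino (hq ▸ hp) ht,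
      Set.ncard_empty]

lemma strip_add_union_strip (a : ℤ) (m n : ℕ) : strip (a + m) n ∪ strip a m = strip a (n + m) := by
  ext c; simp only [strip, Set.mem_union, Set.mem_ofPred_eq]; push_cast; omega

lemma disjoint_strip_strip_add (a : ℤ) (m n : ℕ) : Disjoint (strip a m) (strip (a + m) n) :=
  Set.disjoint_left.mpr fun c h₁ h₂ => by simp only [strip, Set.mem_ofPred_eq] at h₁ h₂; omega

lemma strip_sdiff_strip (a : ℤ) (m n : ℕ) : strip a (n + m) \ strip a m = strip (a + m) n := by
  ext c; simp only [strip, Set.mem_sdiff, Set.mem_ofPred_eq]; push_cast; omega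

lemma IsTiling.prepend {Q B : Set (Set Cell)} {a : ℤ} {m n d d' k k' : ℕ}
    (hQ : IsTiling Q (strip (a + m) n) d k) (hB : IsTiling B (strip a m) d' k') :
    IsTiling (Q ∪ B) (strip a (n + m)) (d + d') (k + k') :=
  strip_add_union_strip a m n ▸ hQ.union hB (finite_strip (a + m) n) (finite_strip a m)
    (disjoint_strip_strip_add a m n).symm

lemma IsTiling.sdiff_strip {P B : Set (Set Cell)} {a : ℤ} {m n d d' k k' : ℕ}
    (hP : IsTiling P (strip a (n + m)) (d + d') (k + k')) (hBP : B ⊆ P)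
    (hB : IsTiling B (strip a m) d' k') : IsTiling (P \ B) (strip (a + m) n) d k :=
  strip_sdiff_strip a m n ▸ hP.sdiff hBP hB (finite_strip a (n + m))

/-- Two trominoes filling columns `a, a + 1, a + 2`: the first one covers column `a` and
reaches into column `a + 1` in row `r`; `3 - r` is the other row. -/
def tromBlock (a r : ℤ) : Set (Set Cell) :=
  {block 1 a \ {(3 - r, a + 1)}, block 1 (a + 1) \ {(r, a + 1)}}

/-- Tromino, domino, tromino filling columns `a, …, a + 3`, the first tromino as in
`tromBlock a r`. -/
def domBlock (a r : ℤ) : Set (Set Cell) :=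
  {block 1 a \ {(3 - r, a + 1)}, hdomino (3 - r) (a + 1), block 1 (a + 2) \ {(3 - r, a + 2)}}

lemma isTiling_tromBlock {a r : ℤ} (hr : r ∈ ({1, 2} : Set ℤ)) :
    IsTiling (tromBlock a r) (strip a 3) 0 2 := by
  have h₁ := isTiling_singleton_of_isTromino (isTromino_block_diff (i := 1) (j := a)
    (c := (3 - r, a + 1)) (by obtain rfl | rfl := hr <;> simp [block]))
  have h₂ := isTiling_singleton_of_isTromino (isTromino_block_diff (i := 1) (j := a + 1)
    (c := (r, a + 1)) (by obtain rfl | rfl := hr <;> simp [block]))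
  have h := h₁.union h₂ ((finite_block _ _).sdiff) ((finite_block _ _).sdiff) ?_
  · rw [tromBlock, ← Set.singleton_union]
    convert h using 2
    ext ⟨x, y⟩
    simp only [strip, block, Set.mem_ofPred_eq, Set.mem_union, Set.mem_sdiff, Set.mem_insert_iff,
      Set.mem_singleton_iff, Prod.mk.injEq] at hr ⊢
    lia
  · rw [Set.disjoint_left]
    rintro ⟨x, y⟩ h h'
    simp only [block, Set.mem_sdiff, Set.mem_insert_iff, Set.mem_singleton_iff,
      Prod.mk.injEq] at hr h h'
    lia

lemma isTiling_domBlock {a r : ℤ} (hr : r ∈ ({1, 2} : Set ℤ)) :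
    IsTiling (domBlock a r) (strip a 4) 1 2 := by
  have h₁ := isTiling_singleton_of_isTromino (isTromino_block_diff (i := 1) (j := a)
    (c := (3 - r, a + 1)) (by obtain rfl | rfl := hr <;> simp [block]))
  have h₂ := isTiling_singleton_of_isHDomino (isHDomino_hdomino (3 - r) (a + 1))
  have h₃ := isTiling_singleton_of_isTromino (isTromino_block_diff (i := 1) (j := a + 2)
    (c := (3 - r, a + 2)) (by obtain rfl | rfl := hr <;> simp [block]))
  have h := h₁.union (h₂.union h₃ (finite_hdomino _ _) (finite_block _ _).sdiff ?_)
    (finite_block _ _).sdiff ((finite_hdomino _ _).union (finite_block _ _).sdiff) ?_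
  · rw [domBlock, ← Set.singleton_union, ← Set.singleton_union]
    convert h using 2
    ext ⟨x, y⟩
    simp only [strip, block, hdomino, Set.mem_ofPred_eq, Set.mem_union, Set.mem_sdiff,
      Set.mem_insert_iff, Set.mem_singleton_iff, Prod.mk.injEq] at hr ⊢
    obtain rfl | rfl := hr <;> lia
  all_goals
    rw [Set.disjoint_left]
    rintro ⟨x, y⟩ h h'
    simp only [block, hdomino, Set.mem_union, Set.mem_sdiff, Set.mem_insert_iff,
      Set.mem_singleton_iff, Prod.mk.injEq] at hr h h'
    lia

lemma tromBlock_injOn (a : ℤ) : Set.InjOn (tromBlock a) {1, 2} := by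
  have key {r : ℤ} (hr : r ∈ ({1, 2} : Set ℤ)) :
      (∃ p ∈ tromBlock a r, (1, a) ∈ p ∧ (1, a + 1) ∈ p) ↔ r = 1 := by
    simp only [tromBlock, block, exists_eq_or_imp, exists_eq_left, Set.mem_sdiff,
      Set.mem_insert_iff, Set.mem_singleton_iff, Prod.mk.injEq] at hr ⊢
    lia
  intro r hr r' hr' h
  have := (key hr).symm.trans (h ▸ key hr')
  simp only [Set.mem_insert_iff, Set.mem_singleton_iff] at hr hr'
  lia

lemma domBlock_injOn (a : ℤ) : Set.InjOn (domBlock a) {1, 2} := by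
  have key {r : ℤ} (hr : r ∈ ({1, 2} : Set ℤ)) :
      (∃ p ∈ domBlock a r, (1, a) ∈ p ∧ (1, a + 1) ∈ p) ↔ r = 1 := by
    simp only [domBlock, block, hdomino, exists_eq_or_imp, exists_eq_left, Set.mem_sdiff,
      Set.mem_insert_iff, Set.mem_singleton_iff, Prod.mk.injEq] at hr ⊢
    lia
  intro r hr r' hr' h
  have := (key hr).symm.trans (h ▸ key hr')
  simp only [Set.mem_insert_iff, Set.mem_singleton_iff] at hr hr'
  lia

section Peel

variable {P : Set (Set Cell)} {a : ℤ} {n d k : ℕ}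

lemma IsTiling.eq_of_cover (hP : IsTiling P (strip a n) d k) {K : Set (Set Cell)} (hKP : K ⊆ P)
    {b r : ℤ} (hr : r ∈ ({1, 2} : Set ℤ)) (hcov : ∀ c ∈ strip a n, c.2 < b → ∃ q ∈ K, c ∈ q)
    {p : Set Cell} (hp : p ∈ P) (hrb : (r, b) ∈ p) (hfree : ∀ q ∈ K, (r, b) ∉ q)
    (hopp : ∃ q ∈ K, (3 - r, b) ∈ q) :
    p = block 1 b \ {(3 - r, b)} ∨ p = hdomino r b := by
  have hdisj : ∀ c ∈ p, ∀ q ∈ K, c ∉ q := fun c hc q hq hcq =>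
    hfree q hq (hP.eq_of_mem hp (hKP hq) hc hcq ▸ hrb)
  refine eq_block_diff_of_mem_of_not_mem hr (hP.isTromino_or_isHDomino p hp)
    (fun c hc => ⟨(hP.subset hp hc).1, (hP.subset hp hc).2.1⟩) (fun c hc => ?_) hrb ?_
  · by_contra hcb
    obtain ⟨q, hq, hcq⟩ := hcov c (hP.subset hp hc) (not_le.mp hcb)
    exact hdisj c hc q hq hcq
  · obtain ⟨q, hq, hq'⟩ := hopp
    exact fun h => hdisj _ h q hq hq'

lemma IsTiling.exists_block_diff_mem (hP : IsTiling P (strip a n) d k) (hn : 1 ≤ n) (hd : d ≤ 1) :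
    ∃ r ∈ ({1, 2} : Set ℤ), block 1 a \ {(3 - r, a + 1)} ∈ P := by
  have hrows : ∀ p ∈ P, ∀ c ∈ p, 1 ≤ c.1 ∧ c.1 ≤ 2 := fun p hp c hc =>
    ⟨(hP.subset hp hc).1, (hP.subset hp hc).2.1⟩
  have hleft : ∀ p ∈ P, ∀ c ∈ p, a ≤ c.2 := fun p hp c hc => (hP.subset hp hc).2.2.1
  obtain ⟨p₁, hp₁, h₁⟩ := hP.exists_mem (c := (1, a)) (by simp only [strip, Set.mem_ofPred_eq]; lia)
  obtain ⟨p₂, hp₂, h₂⟩ := hP.exists_mem (c := (2, a)) (by simp only [strip, Set.mem_ofPred_eq]; lia)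
  by_cases h : p₁ = p₂
  · subst h
    obtain ⟨r, hr, rfl⟩ := exists_eq_block_diff_of_mem_of_mem
      (hP.isTromino_or_isHDomino _ hp₁) (hrows _ hp₁) (hleft _ hp₁) h₁ h₂
    exact ⟨r, hr, hp₁⟩
  -- otherwise each of the two pieces reaches into column `a + 1` in its own row, so they
  -- overlap there unless both are dominoes
  exfalso
  have h₁' : (3 - 1, a) ∉ p₁ := fun h' => h (hP.eq_of_mem hp₁ hp₂ h' h₂)
  have h₂' : (3 - 2, a) ∉ p₂ := fun h' => h (hP.eq_of_mem hp₁ hp₂ h₁ h')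
  rcases eq_block_diff_of_mem_of_not_mem (by simp) (hP.isTromino_or_isHDomino _ hp₁)
    (hrows _ hp₁) (hleft _ hp₁) h₁ h₁' with rfl | rfl <;>
  rcases eq_block_diff_of_mem_of_not_mem (by simp) (hP.isTromino_or_isHDomino _ hp₂)
    (hrows _ hp₂) (hleft _ hp₂) h₂ h₂' with rfl | rfl
  · exact h (hP.eq_of_mem hp₁ hp₂ (c := (1, a + 1)) (by simp [block]) (by simp [block]))
  · exact h (hP.eq_of_mem hp₁ hp₂ (c := (2, a + 1)) (by simp [block]) (by simp [hdomino]))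
  · exact h (hP.eq_of_mem hp₁ hp₂ (c := (1, a + 1)) (by simp [hdomino]) (by simp [block]))
  · exact h (hP.hdomino_unique (finite_strip a n) hd hp₁ hp₂
      (isHDomino_hdomino _ _) (isHDomino_hdomino _ _))

theorem IsTiling.exists_block_subset (hP : IsTiling P (strip a n) d k) (hn : 3 ≤ n) (hd : d ≤ 1) :
    ∃ r ∈ ({1, 2} : Set ℤ), tromBlock a r ⊆ P ∨ domBlock a r ⊆ P := by
  obtain ⟨r, hr, hp₁⟩ := hP.exists_block_diff_mem (by omega) hd
  have hr₁₂ : r = 1 ∨ r = 2 := hr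
  obtain ⟨p₂, hp₂, h₂⟩ := hP.exists_mem (c := (3 - r, a + 1))
    (by simp only [strip, Set.mem_ofPred_eq]; lia)
  have hcov₁ (c : Cell) (hc : c ∈ strip a n) (hca : c.2 < a + 1) :
      ∃ q ∈ ({block 1 a \ {(3 - r, a + 1)}} : Set (Set Cell)), c ∈ q := by
    refine ⟨_, rfl, ?_⟩
    simp only [strip, block, Set.mem_ofPred_eq, Set.mem_sdiff, Set.mem_insert_iff,
      Set.mem_singleton_iff, Prod.ext_iff] at hc hca ⊢
    lia
  rcases hP.eq_of_cover (Set.singleton_subset_iff.mpr hp₁) (by rcases hr₁₂ with rfl | rfl <;> simp)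
    hcov₁ hp₂ h₂ (by simp) ⟨_, rfl, by rcases hr₁₂ with rfl | rfl <;> simp [block]⟩ with rfl | rfl
  · rw [sub_sub_cancel] at hp₂
    exact ⟨r, hr, Or.inl (Set.insert_subset hp₁ (Set.singleton_subset_iff.mpr hp₂))⟩
  obtain ⟨p₃, hp₃, h₃⟩ := hP.exists_mem (c := (r, a + 2))
    (by simp only [strip, Set.mem_ofPred_eq]; lia)
  have hcov₂ (c : Cell) (hc : c ∈ strip a n) (hca : c.2 < a + 2) :
      ∃ q ∈ ({block 1 a \ {(3 - r, a + 1)}, hdomino (3 - r) (a + 1)} : Set (Set Cell)), c ∈ q := by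
    simp only [strip, block, hdomino, Set.mem_ofPred_eq, exists_eq_or_imp, exists_eq_left,
      Set.mem_sdiff, Set.mem_insert_iff, Set.mem_singleton_iff, Prod.ext_iff] at hc hca ⊢
    lia
  rcases hP.eq_of_cover (Set.insert_subset hp₁ (Set.singleton_subset_iff.mpr hp₂)) hr hcov₂
    hp₃ h₃ (by rcases hr₁₂ with rfl | rfl <;> simp [block, hdomino])
    ⟨_, Or.inr rfl, Or.inr (Prod.ext rfl (by ring))⟩ with rfl | rfl
  · exact ⟨r, hr, Or.inr (Set.insert_subset hp₁ (Set.insert_subset hp₂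
      (Set.singleton_subset_iff.mpr hp₃)))⟩
  · have := hP.hdomino_unique (finite_strip a n) hd hp₂ hp₃ (isHDomino_hdomino _ _)
      (isHDomino_hdomino _ _) ▸ h₂
    simp only [hdomino, Set.mem_insert_iff, Set.mem_singleton_iff, Prod.mk.injEq] at this
    lia

end Peel

def Tilings (a : ℤ) (n d k : ℕ) : Type := {P : Set (Set Cell) // IsTiling P (strip a n) d k}

instance (a : ℤ) (n d k : ℕ) : Finite (Tilings a n d k) :=
  Set.Finite.to_subtype (s := {P | IsTiling P (strip a n) d k})
    ((finite_strip a n).finite_subsets.finite_subsets.subset fun _ hP _ hp => hP.subset hp)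

lemma natCard_one_two : Nat.card ({1, 2} : Set ℤ) = 2 := by
  rw [Nat.card_coe_set_eq, Set.ncard_pair (by norm_num)]

def prependTromBlock (a : ℤ) (n d k : ℕ) (x : ({1, 2} : Set ℤ) × Tilings (a + 3) n d k) :
    Tilings a (n + 3) d (k + 2) :=
  ⟨x.2.1 ∪ tromBlock a x.1, x.2.2.prepend (isTiling_tromBlock x.1.2)⟩

def prependDomBlock (a : ℤ) (n d k : ℕ) (x : ({1, 2} : Set ℤ) × Tilings (a + 4) n d k) :
    Tilings a (n + 4) (d + 1) (k + 2) :=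
  ⟨x.2.1 ∪ domBlock a x.1, x.2.2.prepend (isTiling_domBlock x.1.2)⟩

variable {a : ℤ} {n d k : ℕ}

lemma prependTromBlock_injective : Function.Injective (prependTromBlock a n d k) := by
  rintro ⟨r, Q⟩ ⟨r', Q'⟩ h
  obtain ⟨hQ, hB⟩ := Q.2.eq_and_eq_of_union_eq Q'.2 (isTiling_tromBlock r.2)
    (isTiling_tromBlock r'.2) (disjoint_strip_strip_add a 3 n) (congrArg Subtype.val h)
  exact Prod.ext (Subtype.ext (tromBlock_injOn a r.2 r'.2 hB)) (Subtype.ext hQ)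

lemma prependDomBlock_injective : Function.Injective (prependDomBlock a n d k) := by
  rintro ⟨r, Q⟩ ⟨r', Q'⟩ h
  obtain ⟨hQ, hB⟩ := Q.2.eq_and_eq_of_union_eq Q'.2 (isTiling_domBlock r.2)
    (isTiling_domBlock r'.2) (disjoint_strip_strip_add a 4 n) (congrArg Subtype.val h)
  exact Prod.ext (Subtype.ext (domBlock_injOn a r.2 r'.2 hB)) (Subtype.ext hQ)

lemma prependTromBlock_ne_prependDomBlock (x : ({1, 2} : Set ℤ) × Tilings (a + 3) (n + 1) 1 k)
    (y : ({1, 2} : Set ℤ) × Tilings (a + 4) n 0 k) :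
    prependTromBlock a (n + 1) 1 k x ≠ prependDomBlock a n 0 k y := by
  intro h
  have hP : x.2.1 ∪ tromBlock a x.1 = y.2.1 ∪ domBlock a y.1 := congrArg Subtype.val h
  have hmem : hdomino (3 - y.1) (a + 1) ∈ {p ∈ x.2.1 ∪ tromBlock a x.1 | p ⊆ strip a 3} := by
    refine ⟨hP ▸ Or.inr (Or.inr (Or.inl rfl)), ?_⟩
    obtain ⟨r, hr⟩ := y.1
    rintro ⟨i, j⟩ hc
    simp only [hdomino, strip, Set.mem_ofPred_eq, Set.mem_insert_iff, Set.mem_singleton_iff,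
      Prod.mk.injEq] at hr hc ⊢
    lia
  rw [x.2.2.sep_subset_union_eq (isTiling_tromBlock x.1.2)
    (disjoint_strip_strip_add a 3 (n + 1))] at hmem
  exact (isTiling_tromBlock x.1.2).not_isHDomino (finite_strip a 3) hmem (isHDomino_hdomino _ _)

lemma card_tilings_add_three_zero :
    Nat.card (Tilings a (n + 3) 0 (k + 2)) = 2 * Nat.card (Tilings (a + 3) n 0 k) := by
  have hsurj : Function.Surjective (prependTromBlock a n 0 k) := by
    rintro ⟨P, hP⟩
    obtain ⟨r, hr, hB | hB⟩ := hP.exists_block_subset (by omega) zero_le_one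
    · exact ⟨⟨⟨r, hr⟩, ⟨P \ tromBlock a r, hP.sdiff_strip hB (isTiling_tromBlock hr)⟩⟩,
        Subtype.ext (Set.sdiff_union_of_subset hB)⟩
    · exact absurd (isHDomino_hdomino _ _)
        (hP.not_isHDomino (finite_strip a _) (hB (Or.inr (Or.inl rfl))))
  rw [← Nat.card_eq_of_bijective _ ⟨prependTromBlock_injective, hsurj⟩, Nat.card_prod,
    natCard_one_two]

lemma card_tilings_add_four_one :
    Nat.card (Tilings a (n + 4) 1 (k + 2)) =
      2 * Nat.card (Tilings (a + 3) (n + 1) 1 k) + 2 * Nat.card (Tilings (a + 4) n 0 k) := by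
  -- both summands land in `Tilings a (n + 4) 1 (k + 2)`, as `n + 1 + 3` and `0 + 1` reduce
  -- to `n + 4` and `1`
  let f := Sum.elim (prependTromBlock a (n + 1) 1 k) (prependDomBlock a n 0 k)
  have hinj : Function.Injective f := prependTromBlock_injective.sumElim
    prependDomBlock_injective prependTromBlock_ne_prependDomBlock
  have hsurj : Function.Surjective f := by
    rintro ⟨P, hP⟩
    obtain ⟨r, hr, hB | hB⟩ := hP.exists_block_subset (by omega) le_rfl
    · exact ⟨.inl ⟨⟨r, hr⟩, ⟨P \ tromBlock a r, hP.sdiff_strip hB (isTiling_tromBlock hr)⟩⟩,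
        Subtype.ext (Set.sdiff_union_of_subset hB)⟩
    · exact ⟨.inr ⟨⟨r, hr⟩, ⟨P \ domBlock a r, hP.sdiff_strip hB (isTiling_domBlock hr)⟩⟩,
        Subtype.ext (Set.sdiff_union_of_subset hB)⟩
  rw [← Nat.card_eq_of_bijective f ⟨hinj, hsurj⟩, Nat.card_sum, Nat.card_prod, Nat.card_prod,
    natCard_one_two]

lemma card_tilings_zero : Nat.card (Tilings a 0 0 0) = 1 := by
  have hempty : strip a 0 = ∅ := by ext c; simp [strip]
  have heq {P : Set (Set Cell)} (hP : IsTiling P (strip a 0) 0 0) : P = ∅ :=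
    Set.eq_empty_of_forall_notMem fun p hp => by
      simpa [hempty] using (hP.nonempty hp).mono (hP.subset hp)
  let P₀ : Tilings a 0 0 0 := ⟨∅, hempty ▸ isTiling_empty⟩
  have : Unique (Tilings a 0 0 0) :=
    { default := P₀
      uniq := fun P => Subtype.ext ((heq P.2).trans (heq P₀.2).symm) }
  exact Nat.card_unique

lemma isEmpty_tilings_one (hd : d ≤ 1) : IsEmpty (Tilings a 1 d k) := by
  refine ⟨fun ⟨P, hP⟩ => ?_⟩
  obtain ⟨r, hr, hp⟩ := hP.exists_block_diff_mem le_rfl hd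
  have := hP.subset hp (show (r, a + 1) ∈ _ by obtain rfl | rfl := hr <;> simp [block])
  simp [strip] at this

lemma card_tromino_tilings (s : ℕ) (a : ℤ) : Nat.card (Tilings a (3 * s) 0 (2 * s)) = 2 ^ s := by
  induction s generalizing a with
  | zero => exact card_tilings_zero
  | succ s ih =>
    exact (card_tilings_add_three_zero (n := 3 * s) (k := 2 * s)).trans
      (by rw [ih, pow_succ, mul_comm])

lemma card_mixed_tilings (t : ℕ) (a : ℤ) :
    Nat.card (Tilings a (3 * t + 1) 1 (2 * t)) = t * 2 ^ t := by
  induction t generalizing a with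
  | zero =>
    have := isEmpty_tilings_one (a := a) (k := 0) le_rfl
    simp
  | succ t ih =>
    exact (card_tilings_add_four_one (n := 3 * t) (k := 2 * t)).trans
      (by rw [ih, card_tromino_tilings, pow_succ]; ring)

end TwoRow

theorem count_horizontal_domino_deficient_general (t : ℕ) :
    Nat.card {P : Set (Set Cell) //
      IsMixedTiling P (rect 2 (3 * (t : ℤ) + 1)) IsHDomino (2 * t)} = t * 2 ^ t := by
  have hrect : rect 2 (3 * (t : ℤ) + 1) = TwoRow.strip 1 (3 * t + 1) := by
    ext c; simp only [rect, TwoRow.strip, Set.mem_ofPred_eq]; push_cast; omega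
  rw [hrect, ← TwoRow.card_mixed_tilings t 1]
  exact Nat.card_congr (Equiv.subtypeEquivRight fun P => TwoRow.isMixedTiling_iff)

/-- The number of partitions of R(2,3t+1) into 2t L-trominoes and one horizontal domino. -/
theorem count_horizontal_domino_deficient (t : ℕ) (ht : 1 ≤ t) :
    Nat.card {P : Set (Set Cell) //
      IsMixedTiling P (rect 2 (3 * (t : ℤ) + 1)) IsHDomino (2 * t)} = t * 2 ^ t :=
  count_horizontal_domino_deficient_general t
end
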